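/- arXiv:2201.12359 — 2 statements merged into one kernel-verified Lean document; each statement's English description precedes it below -/
import Mathlib

section
/- Let N ≥ 1 be an integer, p ∈ (0,1), and m ≥ 0 an integer. Define φ: ℤ → ℝ by φ(x) = ((p−1)/p)^x · K_m(x;1−p,N). Then φ is an eigenfunction of the Krawtchouk difference operator with eigenvalue m−N: for every x ∈ ℤ, p·(N−x)·(φ(x+1) − φ(x)) + x·(1−p)·(φ(x−1) − φ(x)) = (m−N)·φ(x). -/
open Polynomial

noncomputable def poch (c : ℝ) (k : ℕ) : ℝ := ∏ i ∈ Finset.range k, (c + i)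

noncomputable def kraw (n : ℕ) (p a : ℝ) : Polynomial ℝ :=
  ∑ j ∈ Finset.range (n + 1),
    Polynomial.C (poch (-(n : ℝ)) j * poch (-a + j) (n - j) / (Nat.factorial j) * p ^ (n - j)) *
      ∏ i ∈ Finset.range j, (Polynomial.C (i : ℝ) - Polynomial.X)

noncomputable def vfun (j : ℕ) (x : ℝ) : ℝ := ∏ i ∈ Finset.range j, ((i : ℝ) - x)

noncomputable def cf (n : ℕ) (P a : ℝ) (j : ℕ) : ℝ :=
  poch (-(n : ℝ)) j * poch (-a + j) (n - j) / (Nat.factorial j) * P ^ (n - j)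

lemma eval_kraw (n : ℕ) (P a x : ℝ) :
    Polynomial.eval x (kraw n P a) = ∑ j ∈ Finset.range (n + 1), cf n P a j * vfun j x := by
  simp [kraw, cf, vfun, Polynomial.eval_finset_sum, Polynomial.eval_prod]

lemma poch_succ (c : ℝ) (k : ℕ) : poch c (k + 1) = poch c k * (c + k) :=
  Finset.prod_range_succ _ _

lemma poch_succ' (c : ℝ) (k : ℕ) : poch c (k + 1) = c * poch (c + 1) k := by
  unfold poch
  rw [Finset.prod_range_succ']
  rw [Finset.prod_congr rfl (fun i _ => by push_cast; ring :
    ∀ i ∈ Finset.range k, (c + ((i + 1 : ℕ) : ℝ)) = (c + 1) + i)]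
  push_cast
  ring

lemma vfun_succ (j : ℕ) (x : ℝ) : vfun (j + 1) x = vfun j x * ((j : ℝ) - x) :=
  Finset.prod_range_succ _ _

lemma vfun_up (j : ℕ) (x : ℝ) : vfun (j + 1) (x + 1) = -(1 + x) * vfun j x := by
  unfold vfun
  rw [Finset.prod_range_succ']
  rw [Finset.prod_congr rfl (fun i _ => by push_cast; ring :
    ∀ i ∈ Finset.range j, (((i + 1 : ℕ) : ℝ) - (x + 1)) = (i : ℝ) - x)]
  push_cast
  ring

lemma vfun_down (j : ℕ) (x : ℝ) : vfun (j + 1) x = -x * vfun j (x - 1) := by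
  unfold vfun
  rw [Finset.prod_range_succ']
  rw [Finset.prod_congr rfl (fun i _ => by push_cast; ring :
    ∀ i ∈ Finset.range j, (((i + 1 : ℕ) : ℝ) - x) = (i : ℝ) - (x - 1))]
  push_cast
  ring

lemma Lv (P a : ℝ) (j : ℕ) (x : ℝ) :
    P * (a - x) * (vfun j (x + 1) - vfun j x) + x * (1 - P) * (vfun j (x - 1) - vfun j x) =
      -(j : ℝ) * vfun j x - (j : ℝ) * P * (a - j + 1) * vfun (j - 1) x := by
  cases j with
  | zero => simp [vfun]
  | succ j =>
    have h1 := vfun_up j x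
    have h2 : x * vfun (j + 1) (x - 1) = -(vfun j x * ((j : ℝ) - x) * (((j : ℝ) + 1) - x)) := by
      have hd := vfun_down (j + 1) x
      have hs := vfun_succ (j + 1) x
      have hs0 := vfun_succ j x
      rw [hs0] at hs
      push_cast at hs
      linear_combination hd - hs
    have hs0 := vfun_succ j x
    simp only [Nat.add_sub_cancel]
    push_cast
    rw [hs0, h1]
    linear_combination (1 - P) * h2

lemma cf_rec (n : ℕ) (P a : ℝ) (j : ℕ) (hj : j < n) :
    ((j : ℝ) + 1) * P * (a - j) * cf n P a (j + 1) = ((n : ℝ) - j) * cf n P a j := by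
  unfold cf
  have h1 : n - j = (n - (j + 1)) + 1 := by omega
  rw [h1, poch_succ' (-a + j) (n - (j+1))]
  have h2 : (-a + ((j + 1 : ℕ) : ℝ)) = (-a + (j : ℝ)) + 1 := by push_cast; ring
  rw [poch_succ (-(n:ℝ)) j, h2]
  have h3 : ((Nat.factorial (j+1) : ℝ)) = ((j:ℝ) + 1) * (Nat.factorial j) := by
    rw [Nat.factorial_succ]; push_cast; ring
  rw [h3]
  have hf : ((Nat.factorial j : ℝ)) ≠ 0 := by positivity
  have hj1 : ((j : ℝ) + 1) ≠ 0 := by positivity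
  field_simp
  ring

lemma key (n : ℕ) (P a x : ℝ) :
    P * (a - x) * (Polynomial.eval (x + 1) (kraw n P a) - Polynomial.eval x (kraw n P a)) +
      x * (1 - P) * (Polynomial.eval (x - 1) (kraw n P a) - Polynomial.eval x (kraw n P a)) =
      -(n : ℝ) * Polynomial.eval x (kraw n P a) := by
  rw [eval_kraw, eval_kraw, eval_kraw, Finset.mul_sum]
  rw [← Finset.sum_sub_distrib, ← Finset.sum_sub_distrib, Finset.mul_sum, Finset.mul_sum,
    ← Finset.sum_add_distrib]
  have main : ∀ j ∈ Finset.range (n + 1),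
      P * (a - x) * (cf n P a j * vfun j (x + 1) - cf n P a j * vfun j x) +
        x * (1 - P) * (cf n P a j * vfun j (x - 1) - cf n P a j * vfun j x) =
      (-(j : ℝ) * (cf n P a j * vfun j x)) +
        (-((j : ℝ) * P * (a - j + 1) * (cf n P a j * vfun (j - 1) x))) := fun j _ => by
    linear_combination cf n P a j * Lv P a j x
  rw [Finset.sum_congr rfl main, Finset.sum_add_distrib]
  have h2 : ∑ j ∈ Finset.range (n + 1),
      (-((j : ℝ) * P * (a - j + 1) * (cf n P a j * vfun (j - 1) x))) =
      ∑ j ∈ Finset.range (n + 1), (-(((n : ℝ) - j) * (cf n P a j * vfun j x))) := by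
    rw [Finset.sum_range_succ' _ n, Finset.sum_range_succ]
    have e0 : (-(((0 : ℕ) : ℝ) * P * (a - (0 : ℕ) + 1) * (cf n P a 0 * vfun ((0 : ℕ) - 1) x))) = 0 := by
      simp
    have en : (-(((n : ℝ) - (n : ℕ)) * (cf n P a n * vfun n x))) = 0 := by simp
    rw [e0, en, add_zero, add_zero]
    refine Finset.sum_congr rfl fun j hj => ?_
    have hj' : j < n := Finset.mem_range.mp hj
    have hr := cf_rec n P a j hj'
    simp only [Nat.add_sub_cancel]
    push_cast
    linear_combination (-vfun j x) * hr
  rw [h2, ← Finset.sum_add_distrib]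
  exact Finset.sum_congr rfl fun j hj => by ring

/-- `φ(x) = ((p−1)/p)^x K_m(x;1−p,N)` is an eigenfunction of the Krawtchouk difference operator
with eigenvalue `m−N`:
`p(N−x)(φ(x+1)−φ(x)) + x(1−p)(φ(x−1)−φ(x)) = (m−N) φ(x)` for all `x ∈ ℤ`. -/
theorem krawtchouk_operator_eigenfunction_type3 (N : ℕ) (hN : 1 ≤ N) (p : ℝ)
    (hp0 : 0 < p) (hp1 : p < 1) (m : ℕ) :
    ∀ x : ℤ,
      p * ((N : ℝ) - (x : ℝ)) *
          (((p - 1) / p) ^ (x + 1) * Polynomial.eval ((x : ℝ) + 1) (kraw m (1 - p) (N : ℝ)) -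
            ((p - 1) / p) ^ x * Polynomial.eval (x : ℝ) (kraw m (1 - p) (N : ℝ))) +
        (x : ℝ) * (1 - p) *
          (((p - 1) / p) ^ (x - 1) * Polynomial.eval ((x : ℝ) - 1) (kraw m (1 - p) (N : ℝ)) -
            ((p - 1) / p) ^ x * Polynomial.eval (x : ℝ) (kraw m (1 - p) (N : ℝ))) =
      ((m : ℝ) - (N : ℝ)) *
        (((p - 1) / p) ^ x * Polynomial.eval (x : ℝ) (kraw m (1 - p) (N : ℝ))) := by
  intro x
  have hp : p ≠ 0 := ne_of_gt hp0
  have hp1' : p - 1 ≠ 0 := by linarith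
  have hq : (p - 1) / p ≠ 0 := div_ne_zero hp1' hp
  rw [zpow_add_one₀ hq, zpow_sub_one₀ hq]
  have e1 : p * ((p - 1) / p) = p - 1 := by field_simp
  have e2 : (1 - p) * ((p - 1) / p)⁻¹ = -p := by
    rw [inv_div]
    field_simp
    ring
  have hk := key m (1 - p) (N : ℝ) (x : ℝ)
  linear_combination (-(((p - 1) / p) ^ x : ℝ)) * hk +
    ((p - 1) / p) ^ x * ((N : ℝ) - (x : ℝ)) *
      (Polynomial.eval ((x : ℝ) + 1) (kraw m (1 - p) (N : ℝ))) * e1 +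
    ((p - 1) / p) ^ x * (x : ℝ) *
      (Polynomial.eval ((x : ℝ) - 1) (kraw m (1 - p) (N : ℝ))) * e2
end

section
/- Let N ≥ 1 be an integer and p ∈ (0,1). Then for every real x with −N−2 < x < 0, the Krawtchouk polynomial of degree 2 with parameter a = −N−2 is positive: K_2(x;p,−N−2) > 0. -/
open Polynomial

/-- Positivity of the degree-2 Krawtchouk polynomial with parameter `a = −N−2` on the interval
`(−N−2, 0)`: for `p ∈ (0,1)` and `−N−2 < x < 0`, `K_2(x;p,−N−2) > 0`. -/
theorem krawtchouk_two_positive (N : ℕ) (hN : 1 ≤ N) (p : ℝ) (hp0 : 0 < p) (hp1 : p < 1)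
    (x : ℝ) (hx1 : -(N : ℝ) - 2 < x) (hx2 : x < 0) :
    0 < Polynomial.eval x (kraw 2 p (-(N : ℝ) - 2)) := by
  have hval : Polynomial.eval x (kraw 2 p (-(N : ℝ) - 2)) =
      ((N : ℝ) + 2) * ((N : ℝ) + 3) * p ^ 2 + 2 * ((N : ℝ) + 3) * p * x + x ^ 2 - x := by
    simp [kraw, poch, Finset.sum_range_succ, Finset.prod_range_succ, Nat.factorial]
    ring
  rw [hval]
  have h1 : 0 < -x := by linarith
  have h2 : 0 < x + (N : ℝ) + 2 := by linarith
  have h3 : (1 : ℝ) ≤ (N : ℝ) := by exact_mod_cast hN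
  nlinarith [sq_nonneg (((N : ℝ) + 2) * p + x), mul_pos h1 h2, mul_nonneg (le_of_lt (mul_pos h1 h2)) (by linarith : (0:ℝ) ≤ (N:ℝ)),
    sq_nonneg (p + x), sq_nonneg x]
end
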